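/- Let p be a prime, n ≥ 1, and let j ≥ 1 be an integer such that every finite subgroup of GL_n(ℤ_p) contains an abelian normal subgroup whose index divides j. Then every subgroup 𝒢 of GL_n(𝔽_p) whose order is coprime to p contains an abelian normal subgroup 𝒩 whose index [𝒢 : 𝒩] divides j. (Jordan's theorem for subgroups of GL_n(𝔽_p) of order prime to p.) -/

import Mathlib

/-!
A subgroup `𝒢 ≤ GL_n(𝔽_p)` of order prime to `p` lifts isomorphically to `GL_n(ℤ_p)`. For `k ≥ 1`
the kernel of `GL_n(ℤ/p^{k+1}) → GL_n(ℤ/p^k)` consists of matrices `1 + p^k B`, whose `p`-th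
power is `1 + p^{k+1} B = 1`; it is a `p`-group, so by Schur–Zassenhaus every lift of `𝒢` to
level `k` extends to level `k + 1`. The resulting compatible lifts assemble into a homomorphism
`𝒢 → GL_n(ℤ_p)`, injective because it reduces to the inclusion mod `p`. Its image is a finite
subgroup of `GL_n(ℤ_p)` isomorphic to `𝒢`, and the hypothesis applied to it gives `𝒩`.
-/

open Matrix PadicInt

namespace MonoidHom

variable {G E B : Type*} [Group G] [Group E] [Group B]

theorem exists_rightInverse_of_coprime (π : E →* B) (hπ : Function.Surjective π)
    (hcop : (Nat.card π.ker).Coprime (Nat.card B)) : ∃ σ : B →* E, π.comp σ = id B := by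
  have hindex : π.ker.index = Nat.card B := by
    rw [Subgroup.index_ker, range_eq_top.mpr hπ, Subgroup.card_top]
  obtain ⟨H, hH⟩ := Subgroup.exists_right_complement'_of_coprime (hindex ▸ hcop)
  let e : H ≃* B :=
    hH.symm.QuotientMulEquiv.symm.trans (QuotientGroup.quotientKerEquivOfSurjective π hπ)
  refine ⟨H.subtype.comp e.symm.toMonoidHom, ext fun b => ?_⟩
  exact e.apply_symm_apply b

theorem exists_comp_eq_of_coprime (ρ : E →* B) (hρ : Function.Surjective ρ) (s : G →* B)
    (hcop : (Nat.card ρ.ker).Coprime (Nat.card G)) : ∃ t : G →* E, ρ.comp t = s := by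
  let π := ρ.subgroupComap s.range
  have hker : Nat.card π.ker ∣ Nat.card ρ.ker := by
    rw [← Subgroup.card_map_of_injective (s.range.comap ρ).subtype_injective]
    exact Subgroup.card_dvd_of_le (by rintro _ ⟨x, hx, rfl⟩; exact congrArg Subtype.val hx)
  obtain ⟨σ, hσ⟩ := π.exists_rightInverse_of_coprime
    (ρ.subgroupComap_surjective_of_surjective _ hρ)
    ((hcop.coprime_dvd_left hker).coprime_dvd_right (Subgroup.card_range_dvd s))
  refine ⟨(s.range.comap ρ).subtype.comp (σ.comp s.rangeRestrict), ext fun g => ?_⟩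
  exact congrArg Subtype.val (DFunLike.congr_fun hσ (s.rangeRestrict g))

end MonoidHom

theorem one_add_pow_of_mul_self_eq_zero {R : Type*} [Semiring R] {a : R} (ha : a * a = 0)
    (m : ℕ) : (1 + a) ^ m = 1 + m * a := by
  induction m with
  | zero => simp
  | succ m ih =>
    rw [pow_succ, ih, mul_one_add, add_mul, mul_assoc, ha, mul_zero, add_zero, one_mul,
      Nat.cast_succ, add_one_mul, add_assoc]

theorem ZMod.exists_eq_mul_of_castHom_eq_zero {N d : ℕ} [NeZero N] (h : d ∣ N) {x : ZMod N}
    (hx : ZMod.castHom h (ZMod d) x = 0) : ∃ y, x = d * y := by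
  rw [← ZMod.natCast_zmod_val x, map_natCast, ZMod.natCast_eq_zero_iff] at hx
  obtain ⟨c, hc⟩ := hx
  exact ⟨c, by rw [← ZMod.natCast_zmod_val x, hc, Nat.cast_mul]⟩

namespace Matrix.GeneralLinearGroup

variable {n : Type*} [Fintype n] [DecidableEq n]

theorem map_surjective {R S : Type*} [CommRing R] [CommRing S] (f : R →+* S) [IsLocalHom f]
    (hf : Function.Surjective f) : Function.Surjective (map (n := n) f) := by
  intro u
  choose g hg using hf
  set M := (u : Matrix n n S).map g
  have hM : M.map f = u := by ext; simp [M, hg]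
  have hdet : IsUnit M.det := isUnit_of_map_unit f _ <| by
    rw [RingHom.map_det, RingHom.mapMatrix_apply, hM]
    exact u.isUnit.map detMonoidHom
  exact ⟨mk'' M hdet, Units.ext hM⟩

end Matrix.GeneralLinearGroup

section Tower

variable (p : ℕ) (n : Type*) [Fintype n] [DecidableEq n]

def glReduce (k : ℕ) : GL n (ZMod (p ^ (k + 1))) →* GL n (ZMod (p ^ k)) :=
  GeneralLinearGroup.map (ZMod.castHom (pow_dvd_pow p k.le_succ) _)

variable [Fact p.Prime]

theorem glReduce_comp_map_toZModPow (k : ℕ) :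
    (glReduce p n k).comp (GeneralLinearGroup.map (toZModPow (k + 1))) =
      GeneralLinearGroup.map (toZModPow k) := by
  rw [glReduce, ← GeneralLinearGroup.map_comp, zmod_cast_comp_toZModPow _ _ k.le_succ]

theorem glReduce_surjective {k : ℕ} (hk : k ≠ 0) : Function.Surjective (glReduce p n k) := by
  have : Fact (1 < p ^ k) := ⟨Nat.one_lt_pow hk (Fact.out : p.Prime).one_lt⟩
  refine Function.Surjective.of_comp (g := GeneralLinearGroup.map (toZModPow (k + 1))) ?_
  rw [← MonoidHom.coe_comp, glReduce_comp_map_toZModPow]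
  exact GeneralLinearGroup.map_surjective _ (ZMod.ringHom_surjective _)

theorem pow_eq_one_of_glReduce_eq_one {k : ℕ} (hk : k ≠ 0) {u : GL n (ZMod (p ^ (k + 1)))}
    (hu : glReduce p n k u = 1) : u ^ p = 1 := by
  set c : ZMod (p ^ (k + 1)) := ((p ^ k : ℕ) : ZMod (p ^ (k + 1)))
  obtain ⟨B, hB⟩ : ∃ B, (u : Matrix n n (ZMod (p ^ (k + 1)))) = 1 + c • B := by
    have hu' : ((u : Matrix n n (ZMod (p ^ (k + 1)))) - 1).map
        (ZMod.castHom (pow_dvd_pow p k.le_succ) (ZMod (p ^ k))) = 0 := by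
      rw [← RingHom.mapMatrix_apply, map_sub, map_one, sub_eq_zero]
      exact congrArg Units.val hu
    choose B hB using fun i j => ZMod.exists_eq_mul_of_castHom_eq_zero (pow_dvd_pow p k.le_succ)
      (congrFun (congrFun hu' i) j)
    exact ⟨Matrix.of B, by rw [← sub_eq_iff_eq_add']; ext i j; exact hB i j⟩
  have hcc : c * c = 0 := by
    rw [← Nat.cast_mul, ZMod.natCast_eq_zero_iff, ← pow_add]
    exact pow_dvd_pow p (by omega)
  have hpc : (p : ZMod (p ^ (k + 1))) * c = 0 := by
    rw [← Nat.cast_mul, ← pow_succ', ZMod.natCast_self]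
  have hsq : c • B * c • B = 0 := by rw [smul_mul_smul_comm, hcc, zero_smul]
  have hp : (p : Matrix n n (ZMod (p ^ (k + 1)))) * c • B = 0 := by
    rw [← nsmul_eq_mul, ← Nat.cast_smul_eq_nsmul (ZMod (p ^ (k + 1))), smul_smul, hpc, zero_smul]
  ext1
  rw [Units.val_pow_eq_pow_val, hB, one_add_pow_of_mul_self_eq_zero hsq, hp, add_zero,
    Units.val_one]

theorem isPGroup_ker_glReduce {k : ℕ} (hk : k ≠ 0) : IsPGroup p (glReduce p n k).ker :=
  fun u => ⟨1, Subtype.ext (by simpa using pow_eq_one_of_glReduce_eq_one p n hk u.2)⟩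

theorem exists_glReduce_comp_eq {G : Type*} [Group G] (hG : (Nat.card G).Coprime p) {k : ℕ}
    (hk : k ≠ 0) (s : G →* GL n (ZMod (p ^ k))) :
    ∃ t : G →* GL n (ZMod (p ^ (k + 1))), (glReduce p n k).comp t = s := by
  obtain ⟨m, hm⟩ := IsPGroup.iff_card.mp (isPGroup_ker_glReduce p n hk)
  exact (glReduce p n k).exists_comp_eq_of_coprime (glReduce_surjective p n hk) s
    (hm ▸ Nat.Coprime.pow_left m hG.symm)

end Tower

namespace PadicInt

variable {p : ℕ} [Fact p.Prime]

theorem exists_toZModPow_eq (x : ∀ k, ZMod (p ^ k))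
    (hx : ∀ k, ZMod.castHom (pow_dvd_pow p k.le_succ) _ (x (k + 1)) = x k) :
    ∃ y : ℤ_[p], ∀ k, toZModPow k y = x k := by
  have hdvd : ∀ k, (p : ℤ) ^ k ∣ ((x (k + 1)).val : ℤ) - (x k).val := fun k => by
    rw [← Nat.cast_pow, ← ZMod.intCast_eq_intCast_iff_dvd_sub, Int.cast_natCast, Int.cast_natCast,
      ZMod.natCast_zmod_val, ZMod.natCast_val, ← hx k]
    rfl
  exact ⟨ofIntSeq _ (isCauSeq_padicNorm_of_pow_dvd_sub (fun k => ((x k).val : ℤ)) p hdvd),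
    fun k => by
      rw [toZModPow_ofIntSeq_of_pow_dvd_sub _ _ hdvd, Int.cast_natCast, ZMod.natCast_zmod_val]⟩

theorem ringHom_eq_toZMod (f : ℤ_[p] →+* ZMod p) : f = toZMod :=
  ZMod.ringHom_eq_of_ker_eq _ _ <| by
    rw [ker_toZMod]
    exact IsLocalRing.eq_maximalIdeal
      (RingHom.ker_isMaximal_of_surjective f (ZMod.ringHom_surjective f))

theorem matrix_ext_of_map_toZModPow {n : Type*} {A B : Matrix n n ℤ_[p]}
    (h : ∀ k, A.map (toZModPow k) = B.map (toZModPow k)) : A = B :=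
  Matrix.ext fun i j => ext_of_toZModPow.mp fun k => congrFun (congrFun (h k) i) j

theorem exists_matrix_map_toZModPow_eq {n : Type*} (M : ∀ k, Matrix n n (ZMod (p ^ k)))
    (hM : ∀ k, (M (k + 1)).map (ZMod.castHom (pow_dvd_pow p k.le_succ) _) = M k) :
    ∃ A : Matrix n n ℤ_[p], ∀ k, A.map (toZModPow k) = M k := by
  choose A hA using fun i j =>
    exists_toZModPow_eq (fun k => M k i j) (fun k => congrFun (congrFun (hM k) i) j)
  exact ⟨Matrix.of A, fun k => Matrix.ext fun i j => hA i j k⟩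

end PadicInt

section Lift

variable (p : ℕ) [Fact p.Prime] (n : Type*) [Fintype n] [DecidableEq n]
  {G : Type*} [Group G]

theorem exists_padicInt_lift_of_compatible (s : ∀ k, G →* GL n (ZMod (p ^ k)))
    (hs : ∀ k, (glReduce p n k).comp (s (k + 1)) = s k) :
    ∃ S : G →* GL n ℤ_[p], ∀ k, (GeneralLinearGroup.map (toZModPow k)).comp S = s k := by
  choose A hA using fun g =>
    exists_matrix_map_toZModPow_eq (fun k => (s k g : Matrix n n (ZMod (p ^ k))))
      (fun k => congrArg Units.val (DFunLike.congr_fun (hs k) g))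
  let S : G →* Matrix n n ℤ_[p] :=
    { toFun := A
      map_one' := matrix_ext_of_map_toZModPow fun k => by
        rw [hA, map_one, Units.val_one, ← RingHom.mapMatrix_apply, map_one]
      map_mul' := fun g h => matrix_ext_of_map_toZModPow fun k => by
        rw [hA, map_mul, Units.val_mul, ← RingHom.mapMatrix_apply, map_mul,
          RingHom.mapMatrix_apply, RingHom.mapMatrix_apply, hA, hA] }
  exact ⟨S.toHomUnits, fun k => MonoidHom.ext fun g => Units.ext (hA g k)⟩

theorem exists_compatible_lifts (hG : (Nat.card G).Coprime p) (ρ : G →* GL n (ZMod (p ^ 1))) :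
    ∃ s : ∀ k, G →* GL n (ZMod (p ^ k)),
      (∀ k, (glReduce p n k).comp (s (k + 1)) = s k) ∧ s 1 = ρ := by
  choose lift hlift using fun k : ℕ => exists_glReduce_comp_eq p n hG k.succ_ne_zero
  let t : ∀ k, G →* GL n (ZMod (p ^ (k + 1))) := fun k => Nat.rec ρ (fun k t => lift k t) k
  refine ⟨fun k => k.casesOn 1 t, fun k => ?_, rfl⟩
  cases k with
  | zero =>
    -- level `0` is `GL n (ZMod 1)`, a trivial group
    have : Subsingleton (ZMod (p ^ 0)) := by rw [pow_zero]; infer_instance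
    exact MonoidHom.ext fun g => Units.ext (Subsingleton.elim _ _)
  | succ k => exact hlift k (t k)

theorem exists_padicInt_lift_of_coprime (hG : (Nat.card G).Coprime p) (ρ : G →* GL n (ZMod p)) :
    ∃ S : G →* GL n ℤ_[p], (GeneralLinearGroup.map toZMod).comp S = ρ := by
  -- `ZMod (p ^ 1)` is not definitionally `ZMod p`
  let e : ZMod p ≃+* ZMod (p ^ 1) := ZMod.ringEquivCongr (pow_one p).symm
  obtain ⟨s, hs, hs1⟩ :=
    exists_compatible_lifts p n hG ((GeneralLinearGroup.map e.toRingHom).comp ρ)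
  obtain ⟨S, hS⟩ := exists_padicInt_lift_of_compatible p n s hs
  refine ⟨S, ?_⟩
  rw [← ringHom_eq_toZMod (e.symm.toRingHom.comp (toZModPow 1)), GeneralLinearGroup.map_comp,
    MonoidHom.comp_assoc, hS, hs1, ← MonoidHom.comp_assoc, ← GeneralLinearGroup.map_comp,
    RingEquiv.symm_toRingHom_comp_toRingHom, GeneralLinearGroup.map_id, MonoidHom.id_comp]

end Lift

def HasAbelianNormalSubgroupIndexDvd (G : Type*) [Group G] (j : ℕ) : Prop :=
  ∃ N : Subgroup G, N.Normal ∧ (∀ a ∈ N, ∀ b ∈ N, a * b = b * a) ∧ N.index ∣ j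

theorem HasAbelianNormalSubgroupIndexDvd.of_surjective {F G : Type*} [Group F] [Group G] {j : ℕ}
    (h : HasAbelianNormalSubgroupIndexDvd F j) (T : F →* G) (hT : Function.Surjective T) :
    HasAbelianNormalSubgroupIndexDvd G j := by
  obtain ⟨N, hN, hcomm, hindex⟩ := h
  refine ⟨N.map T, hN.map T hT, ?_, (N.index_map_dvd hT).trans hindex⟩
  rintro _ ⟨a, ha, rfl⟩ _ ⟨b, hb, rfl⟩
  rw [← map_mul, ← map_mul, hcomm a ha b hb]

theorem jordan_theorem_mod_p_general (p : ℕ) [Fact p.Prime] (n : ℕ) (j : ℕ)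
    (hJordan : ∀ G : Subgroup (GL (Fin n) ℤ_[p]), Finite G →
      ∃ N : Subgroup G, N.Normal ∧ (∀ a ∈ N, ∀ b ∈ N, a * b = b * a) ∧
        N.index ∣ j)
    (𝒢 : Subgroup (GL (Fin n) (ZMod p)))
    (hcard : Nat.Coprime (Nat.card 𝒢) p) :
    ∃ 𝒩 : Subgroup 𝒢, 𝒩.Normal ∧ (∀ a ∈ 𝒩, ∀ b ∈ 𝒩, a * b = b * a) ∧
      𝒩.index ∣ j := by
  obtain ⟨S, hS⟩ := exists_padicInt_lift_of_coprime p (Fin n) hcard 𝒢.subtype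
  have hS_inj : Function.Injective S := by
    refine .of_comp (f := GeneralLinearGroup.map toZMod) ?_
    rw [← MonoidHom.coe_comp, hS]
    exact 𝒢.subtype_injective
  let e : 𝒢 ≃* S.range := MonoidHom.ofInjective hS_inj
  have : Finite S.range := Finite.of_equiv _ e.toEquiv
  exact HasAbelianNormalSubgroupIndexDvd.of_surjective (hJordan S.range this) e.symm.toMonoidHom
    e.symm.surjective

/-- Jordan's theorem for subgroups of `GL_n(𝔽_p)` of order prime to `p`:
if `j ≥ 1` is such that every finite subgroup of `GL_n(ℤ_p)` contains an
abelian normal subgroup of index dividing `j`, then every subgroup of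
`GL_n(𝔽_p)` of order coprime to `p` contains an abelian normal subgroup of
index dividing `j`. -/
theorem jordan_theorem_mod_p (p : ℕ) [Fact p.Prime] (n : ℕ) (hn : 1 ≤ n)
    (j : ℕ) (hj : 1 ≤ j)
    (hJordan : ∀ G : Subgroup (GL (Fin n) ℤ_[p]), Finite G →
      ∃ N : Subgroup G, N.Normal ∧ (∀ a ∈ N, ∀ b ∈ N, a * b = b * a) ∧
        N.index ∣ j)
    (𝒢 : Subgroup (GL (Fin n) (ZMod p)))
    (hcard : Nat.Coprime (Nat.card 𝒢) p) :
    ∃ 𝒩 : Subgroup 𝒢, 𝒩.Normal ∧ (∀ a ∈ 𝒩, ∀ b ∈ 𝒩, a * b = b * a) ∧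
      𝒩.index ∣ j :=
  jordan_theorem_mod_p_general p n j hJordan 𝒢 hcard
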